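/- For every n ≥ 1, every tuple Γ̃ = (Γ₁,…,Γ_n) of elements of M and all σ, τ ∈ S_n: (i) Z_n(Γ̃∘τ) = q(Γ̃,τ)⁻²·Z_n(Γ̃); (ii) C_{Γ̃∘τ}(τ⁻¹∘σ) = q(Γ̃,τ)·C_{Γ̃}(σ). -/

import Mathlib

open scoped Classical

noncomputable section

namespace NC

/-- Number of leaves of a planar binary tree. -/
def leaves {α : Type*} : FreeMagma α → ℕ
  | .of _ => 1
  | .mul a b => leaves a + leaves b

/-- The list of leaf labels of a planar binary tree, read left to right. -/
def leafList {α : Type*} : FreeMagma α → List α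
  | .of i => [i]
  | .mul a b => leafList a ++ leafList b

/-- Planar binary trees with leaves labelled in `Fin (2*d)`. -/
abbrev M (d : ℕ) := FreeMagma (Fin (2 * d))

/-- The strict order `≺` on labelled planar binary trees. -/
def mlt {d : ℕ} : M d → M d → Prop
  | .of i, .of j => i < j
  | .of _, .mul _ _ => True
  | .mul _ _, .of _ => False
  | .mul a b, .mul c e =>
      leaves (FreeMagma.mul a b) < leaves (FreeMagma.mul c e) ∨
        (leaves (FreeMagma.mul a b) = leaves (FreeMagma.mul c e) ∧
          (mlt a c ∨ (a = c ∧ mlt b e)))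

/-- `a ⪰ b`. -/
def mge {d : ℕ} (a b : M d) : Prop := mlt b a ∨ a = b

/-- The set `Y⁺` of admissible trees. -/
inductive Yplus {d : ℕ} : M d → Prop
  | of (i : Fin (2 * d)) : Yplus (FreeMagma.of i)
  | mul {a b : M d} : Yplus a → Yplus b → mlt a b → Yplus (a * b)

abbrev Yp (d : ℕ) := {Γ : M d // Yplus Γ}

variable {d : ℕ} {K : Type*} [CommRing K]

/-- Extension of `q` to pairs of trees. -/
def qT (q : Fin (2 * d) → Fin (2 * d) → Kˣ) (Γ Γ' : M d) : Kˣ :=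
  ((leafList Γ).map fun i => ((leafList Γ').map fun j => q i j).prod).prod

/-- Defining relations of the bracketing (epoché) algebra. -/
inductive Erel (q : Fin (2 * d) → Fin (2 * d) → Kˣ) :
    FreeAlgebra K (M d) → FreeAlgebra K (M d) → Prop
  | rel (Γ Γ' : M d) :
      Erel q (FreeAlgebra.ι K Γ * FreeAlgebra.ι K Γ')
        (((qT q Γ' Γ : Kˣ) : K) • (FreeAlgebra.ι K Γ' * FreeAlgebra.ι K Γ)
          + FreeAlgebra.ι K (Γ * Γ'))

/-- The bracketing (epoché) algebra `E`. -/
abbrev E (q : Fin (2 * d) → Fin (2 * d) → Kˣ) := RingQuot (Erel (K := K) q)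

/-- The noncommutative Planck constants `ℏ_Γ`. -/
def hbar (q : Fin (2 * d) → Fin (2 * d) → Kˣ) (Γ : M d) : E q :=
  RingQuot.mkAlgHom K (Erel q) (FreeAlgebra.ι K Γ)

/-- Defining relations of the classical shadow. -/
inductive Arel (q : Fin (2 * d) → Fin (2 * d) → Kˣ) :
    FreeAlgebra K (Yp d) → FreeAlgebra K (Yp d) → Prop
  | rel (Γ Γ' : Yp d) :
      Arel q (FreeAlgebra.ι K Γ * FreeAlgebra.ι K Γ')
        (((qT q Γ'.1 Γ.1 : Kˣ) : K) • (FreeAlgebra.ι K Γ' * FreeAlgebra.ι K Γ))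

/-- The classical shadow `A`. -/
abbrev A (q : Fin (2 * d) → Fin (2 * d) → Kˣ) := RingQuot (Arel (K := K) q)

/-- The generators `h_Γ` of the classical shadow. -/
def hA (q : Fin (2 * d) → Fin (2 * d) → Kˣ) (Γ : Yp d) : A q :=
  RingQuot.mkAlgHom K (Arel q) (FreeAlgebra.ι K Γ)

/-- A weakly decreasing list of trees: `Γ₁ ⪰ Γ₂ ⪰ … ⪰ Γ_n`. -/
def DecChain {d : ℕ} (l : List (Yp d)) : Prop := l.Chain' fun a b => mge a.1 b.1

/-- Total degree of a list of trees. -/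
def degList {d : ℕ} (l : List (M d)) : ℕ := (l.map fun Γ => leaves Γ - 1).sum

/-- The decreasing filtration `F` on `E`. -/
def Ffil (q : Fin (2 * d) → Fin (2 * d) → Kˣ) (n : ℕ) : Submodule K (E q) :=
  Submodule.span K {x | ∃ l : List (M d), n ≤ degList l ∧ x = (l.map (hbar q)).prod}

/-- Homogeneous component of degree `D` of the classical shadow. -/
def Adeg (q : Fin (2 * d) → Fin (2 * d) → Kˣ) (D : ℕ) : Submodule K (A q) :=
  Submodule.span K {x | ∃ l : List (Yp d),
    DecChain l ∧ degList (l.map (·.1)) = D ∧ x = (l.map (hA q)).prod}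

/-- The braiding coefficient `q(Γ̃, σ)`. -/
def qPerm (q : Fin (2 * d) → Fin (2 * d) → Kˣ) {n : ℕ} (Γ : Fin n → M d)
    (σ : Equiv.Perm (Fin n)) : Kˣ :=
  ∏ p ∈ Finset.univ.filter
      (fun p : Fin n × Fin n => p.1 < p.2 ∧ σ.symm p.2 < σ.symm p.1),
    qT q (Γ p.1) (Γ p.2)

/-- The partition function `Z_n(Γ̃)`. -/
def Zfun (q : Fin (2 * d) → Fin (2 * d) → Kˣ) {n : ℕ} (Γ : Fin n → M d) : K :=
  ∑ σ : Equiv.Perm (Fin n), ((qPerm q Γ σ : Kˣ) : K) ^ 2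

/-!
Both identities follow from the cocycle relation `q(Γ̃∘τ, τ⁻¹σ) · q(Γ̃,τ) = q(Γ̃,σ)`; for (i),
reindex the sum defining `Z_n(Γ̃∘τ)` by `σ ↦ τ⁻¹σ`. With `F i j = q_{Γᵢ,Γⱼ}`, the coefficient
`q(Γ̃,σ)` is the product of `F` over the pairs that the rankings `id` and `σ⁻¹` order oppositely,
and `q(Γ̃∘τ, τ⁻¹σ)` is the same product for the rankings `τ⁻¹` and `σ⁻¹`. Since
`F j i = (F i j)⁻¹`, such a product for rankings `π, α` is `∏_{i<j} F i j ^ (a_π - a_α)`, where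
`a_π ∈ {0,1}` records whether `π` puts `i` before `j`; the exponents telescope.
-/

section Discord

open Finset

variable {ι G : Type*} [Fintype ι] [LinearOrder ι] [CommGroup G]

lemma prod_filter_eq_prod_lt_zpow (F : ι → ι → G) (hF : ∀ i j, F i j * F j i = 1)
    (R : ι → ι → Prop) [DecidableRel R] (hR : ∀ i, ¬ R i i) :
    ∏ p ∈ univ.filter (fun p : ι × ι => R p.1 p.2), F p.1 p.2 =
      ∏ p ∈ univ.filter (fun p : ι × ι => p.1 < p.2),
        F p.1 p.2 ^ ((if R p.1 p.2 then 1 else 0) - (if R p.2 p.1 then 1 else 0) : ℤ) := by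
  set g : ι × ι → G := fun p => if R p.1 p.2 then F p.1 p.2 else 1
  have hsplit : ∀ p : ι × ι,
      g p = (if p.1 < p.2 then g p else 1) * (if p.2 < p.1 then g p else 1) := by
    intro p
    rcases lt_trichotomy p.1 p.2 with h | h | h
    · simp [h, h.not_gt]
    · simp [g, h, hR]
    · simp [h, h.not_gt]
  have hswap : ∀ p : ι × ι, g p * g p.swap =
      F p.1 p.2 ^ ((if R p.1 p.2 then 1 else 0) - (if R p.2 p.1 then 1 else 0) : ℤ) := by
    intro p
    have hinv : F p.2 p.1 = (F p.1 p.2)⁻¹ := eq_inv_of_mul_eq_one_left (by rw [mul_comm, hF])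
    by_cases h₁ : R p.1 p.2 <;> by_cases h₂ : R p.2 p.1 <;> simp [g, h₁, h₂, hinv]
  calc ∏ p ∈ univ.filter (fun p : ι × ι => R p.1 p.2), F p.1 p.2
      = ∏ p, (if p.1 < p.2 then g p else 1) * (if p.1 < p.2 then g p.swap else 1) := by
        rw [prod_filter, prod_congr rfl fun p _ => hsplit p, prod_mul_distrib,
          prod_mul_distrib, ← (Equiv.prodComm ι ι).prod_comp (fun p => if p.2 < p.1 then g p else 1)]
        rfl
    _ = _ := by
        rw [prod_filter]
        refine prod_congr rfl fun p _ => ?_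
        by_cases h : p.1 < p.2
        · simp only [h, ite_true, hswap]
        · simp only [h, ite_false, mul_one]

def discordProd (F : ι → ι → G) (π α : Equiv.Perm ι) : G :=
  ∏ p ∈ univ.filter (fun p : ι × ι => π p.1 < π p.2 ∧ α p.2 < α p.1), F p.1 p.2

lemma discordProd_eq_prod_lt_zpow (F : ι → ι → G) (hF : ∀ i j, F i j * F j i = 1)
    (π α : Equiv.Perm ι) :
    discordProd F π α = ∏ p ∈ univ.filter (fun p : ι × ι => p.1 < p.2),
      F p.1 p.2 ^ ((if π p.1 < π p.2 ∧ α p.2 < α p.1 then 1 else 0) -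
        (if π p.2 < π p.1 ∧ α p.1 < α p.2 then 1 else 0) : ℤ) :=
  prod_filter_eq_prod_lt_zpow F hF (fun i j => π i < π j ∧ α j < α i) fun _ h => lt_irrefl _ h.1

lemma discordProd_mul_discordProd (F : ι → ι → G) (hF : ∀ i j, F i j * F j i = 1)
    (π ρ α : Equiv.Perm ι) :
    discordProd F π ρ * discordProd F ρ α = discordProd F π α := by
  rw [discordProd_eq_prod_lt_zpow F hF, discordProd_eq_prod_lt_zpow F hF,
    discordProd_eq_prod_lt_zpow F hF, ← prod_mul_distrib]
  refine prod_congr rfl fun p hp => ?_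
  rw [← zpow_add]
  congr 1
  have hne : p.1 ≠ p.2 := (mem_filter.1 hp).2.ne
  rcases (π.injective.ne hne).lt_or_gt with h₁ | h₁ <;>
  rcases (ρ.injective.ne hne).lt_or_gt with h₂ | h₂ <;>
  rcases (α.injective.ne hne).lt_or_gt with h₃ | h₃ <;>
  simp [h₁, h₂, h₃, h₁.not_gt, h₂.not_gt, h₃.not_gt]

lemma discordProd_comp (F : ι → ι → G) (τ π α : Equiv.Perm ι) :
    discordProd (fun i j => F (τ i) (τ j)) π α = discordProd F (π * τ⁻¹) (α * τ⁻¹) := by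
  rw [discordProd, discordProd, prod_filter, prod_filter]
  exact Fintype.prod_equiv (Equiv.prodCongr τ τ) _ _ fun p => by simp [Equiv.Perm.mul_apply]

end Discord

lemma qT_mul_qT_swap (q : Fin (2 * d) → Fin (2 * d) → Kˣ) (hq : ∀ i j, q i j * q j i = 1)
    (a b : M d) : qT q a b * qT q b a = 1 := by
  have hcomm := Multiset.prod_map_prod_map (leafList b : Multiset (Fin (2 * d)))
    (leafList a) (f := fun j i => q j i)
  simp only [Multiset.map_coe, Multiset.prod_coe] at hcomm
  simp [qT, hcomm, ← List.prod_map_mul, hq]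

lemma qPerm_eq_discordProd (q : Fin (2 * d) → Fin (2 * d) → Kˣ) {n : ℕ} (Γ : Fin n → M d)
    (σ : Equiv.Perm (Fin n)) :
    qPerm q Γ σ = discordProd (fun i j => qT q (Γ i) (Γ j)) 1 σ⁻¹ :=
  rfl

lemma qPerm_comp (q : Fin (2 * d) → Fin (2 * d) → Kˣ) (hq : ∀ i j, q i j * q j i = 1)
    {n : ℕ} (Γ : Fin n → M d) (σ τ : Equiv.Perm (Fin n)) :
    qPerm q (fun i => Γ (τ i)) (τ⁻¹ * σ) = qPerm q Γ σ * (qPerm q Γ τ)⁻¹ := by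
  set F := fun i j => qT q (Γ i) (Γ j)
  have hcomp : qPerm q (fun i => Γ (τ i)) (τ⁻¹ * σ) = discordProd F τ⁻¹ σ⁻¹ :=
    (discordProd_comp F τ 1 (τ⁻¹ * σ)⁻¹).trans (by congr 1; group)
  rw [eq_mul_inv_iff_mul_eq, hcomp, qPerm_eq_discordProd, qPerm_eq_discordProd, mul_comm]
  exact discordProd_mul_discordProd F (fun i j => qT_mul_qT_swap q hq _ _) _ _ _

lemma Zfun_comp (q : Fin (2 * d) → Fin (2 * d) → Kˣ) (hq : ∀ i j, q i j * q j i = 1)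
    {n : ℕ} (Γ : Fin n → M d) (τ : Equiv.Perm (Fin n)) :
    Zfun q (fun i => Γ (τ i)) = (((qPerm q Γ τ)⁻¹ : Kˣ) : K) ^ 2 * Zfun q Γ := by
  rw [Zfun, Zfun, Finset.mul_sum]
  symm
  refine Fintype.sum_equiv (Equiv.mulLeft τ⁻¹) _ _ fun σ => ?_
  rw [Equiv.coe_mulLeft, qPerm_comp q hq, Units.val_mul]
  ring

theorem statement11_general (d : ℕ) (K : Type*) [Field K]
    (q : Fin (2 * d) → Fin (2 * d) → Kˣ)
    (hq2 : ∀ i j, q i j * q j i = 1)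
    (n : ℕ) (Γ : Fin n → M d) (σ τ : Equiv.Perm (Fin n)) :
    Zfun (K := K) q (fun i => Γ (τ i)) =
        (((qPerm q Γ τ)⁻¹ : Kˣ) : K) ^ 2 * Zfun (K := K) q Γ ∧
      ((qPerm q (fun i => Γ (τ i)) (τ⁻¹ * σ) : Kˣ) : K) /
          Zfun (K := K) q (fun i => Γ (τ i)) =
        ((qPerm q Γ τ : Kˣ) : K) *
          (((qPerm q Γ σ : Kˣ) : K) / Zfun (K := K) q Γ) := by
  have hZ := Zfun_comp q hq2 Γ τ
  refine ⟨hZ, ?_⟩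
  rw [hZ, qPerm_comp q hq2, div_mul_eq_div_div_swap]
  push_cast
  field_simp

/-- behaviour of `Z_n` and of the q-Weyl coefficients `C` under permutation of
the tuple: `Z_n(Γ̃∘τ) = q(Γ̃,τ)⁻²·Z_n(Γ̃)` and `C_{Γ̃∘τ}(τ⁻¹∘σ) = q(Γ̃,τ)·C_{Γ̃}(σ)`. -/
theorem statement11 (d : ℕ) (hd : 1 ≤ d) (K : Type*) [Field K]
    (q : Fin (2 * d) → Fin (2 * d) → Kˣ)
    (hq1 : ∀ i, q i i = 1) (hq2 : ∀ i j, q i j * q j i = 1)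
    (hZ : ∀ (n : ℕ) (Γ : Fin n → M d), Zfun (K := K) q Γ ≠ 0)
    (n : ℕ) (hn : 1 ≤ n) (Γ : Fin n → M d) (σ τ : Equiv.Perm (Fin n)) :
    Zfun (K := K) q (fun i => Γ (τ i)) =
        (((qPerm q Γ τ)⁻¹ : Kˣ) : K) ^ 2 * Zfun (K := K) q Γ ∧
      ((qPerm q (fun i => Γ (τ i)) (τ⁻¹ * σ) : Kˣ) : K) /
          Zfun (K := K) q (fun i => Γ (τ i)) =
        ((qPerm q Γ τ : Kˣ) : K) *
          (((qPerm q Γ σ : Kˣ) : K) / Zfun (K := K) q Γ) :=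
  statement11_general d K q hq2 n Γ σ τ

end NC
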